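/- Suppose there exists a set X ⊆ 2^ω that is not μ-measurable and has the property that every family 𝒢 of functions ℕ → ℕ with |𝒢| ≤ |X| is bounded under eventual domination (there is g : ℕ → ℕ with f(n) ≤ g(n) for all but finitely many n, for every f ∈ 𝒢); i.e., the uniformity of the null ideal is less than the bounding number 𝔟. Then there exists a free filter F on ℕ such that, identified with a subset of 2^ω, F is meager but is not μ-measurable. -/

import Mathlib

open MeasureTheory

/-- `F` is a filter of subsets of `ℕ`: it contains `ℕ`, is closed under finite (binary)
intersections and under supersets. -/
def IsSetFilter (F : Set (Set ℕ)) : Prop :=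
  Set.univ ∈ F ∧ (∀ X ∈ F, ∀ Y ∈ F, X ∩ Y ∈ F) ∧ (∀ X ∈ F, ∀ Y : Set ℕ, X ⊆ Y → Y ∈ F)

/-- A free filter: a proper filter containing every cofinite subset of `ℕ`
(so every member of `F` is infinite). -/
def IsFreeFilter (F : Set (Set ℕ)) : Prop :=
  IsSetFilter F ∧ ∅ ∉ F ∧ ∀ X : Set ℕ, Xᶜ.Finite → X ∈ F

open scoped Classical in
/-- The characteristic function of `X ⊆ ℕ`, as a point of Cantor space `2^ω = ℕ → Bool`. -/
noncomputable def chi (X : Set ℕ) : ℕ → Bool := fun n => if n ∈ X then true else false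

/-- `μ` is the canonical product probability measure on Cantor space (the infinite product
of uniform measures on `{0,1}`, i.e. Haar measure): every cylinder determined by values on
a finite set `s` has measure `(1/2)^|s|`. -/
def IsCantorMeasure (μ : Measure (ℕ → Bool)) : Prop :=
  ∀ (s : Finset ℕ) (f : ℕ → Bool),
    μ {x : ℕ → Bool | ∀ i ∈ s, x i = f i} = (1 / 2 : ENNReal) ^ s.card


namespace MFP

open Set Filter

noncomputable section

/-- Cylinders. -/
def Cyl (s : Finset ℕ) (f : ℕ → Bool) : Set (ℕ → Bool) := {x | ∀ i ∈ s, x i = f i}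

def CylSys : Set (Set (ℕ → Bool)) := {C | ∃ s f, C = Cyl s f}

lemma measurableSet_cyl (s : Finset ℕ) (f : ℕ → Bool) : MeasurableSet (Cyl s f) := by
  have : Cyl s f = ⋂ i ∈ s, (fun x : ℕ → Bool => x i) ⁻¹' {f i} := by
    ext x; simp [Cyl]
  rw [this]
  exact MeasurableSet.biInter s.countable_toSet
    (fun i _ => (measurable_pi_apply i) (MeasurableSet.singleton (f i)))

lemma gen_eq : (inferInstance : MeasurableSpace (ℕ → Bool))
    = MeasurableSpace.generateFrom CylSys := by
  apply le_antisymm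
  · rw [show (inferInstance : MeasurableSpace (ℕ → Bool)) = MeasurableSpace.pi from rfl]
    refine iSup_le fun i => ?_
    intro s hs
    obtain ⟨t, -, rfl⟩ := hs
    have : (fun (x : ℕ → Bool) => x i) ⁻¹' t = ⋃ b ∈ t, Cyl {i} (fun _ => b) := by
      ext x
      simp [Cyl]
    rw [this]
    exact MeasurableSet.biUnion t.to_countable
      (fun b _ => MeasurableSpace.measurableSet_generateFrom ⟨{i}, fun _ => b, rfl⟩)
  · refine MeasurableSpace.generateFrom_le fun C hC => ?_
    obtain ⟨s, f, rfl⟩ := hC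
    exact measurableSet_cyl s f

lemma piSys : IsPiSystem CylSys := by
  rintro C ⟨s, f, rfl⟩ D ⟨t, g, rfl⟩ hne
  classical
  obtain ⟨x₀, hx₀⟩ := hne
  refine ⟨s ∪ t, fun n => if n ∈ s then f n else g n, ?_⟩
  have hfg : ∀ i ∈ s, ∀ _ : i ∈ t, f i = g i := by
    intro i hi hit
    rw [← hx₀.1 i hi, hx₀.2 i hit]
  ext x
  constructor
  · rintro ⟨h1, h2⟩ i hi
    rcases Finset.mem_union.mp hi with h | h
    · simp only [h, if_pos]; exact h1 i h
    · by_cases hs : i ∈ s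
      · simp only [hs, if_pos]; exact h1 i hs
      · simp only [hs, if_neg, if_false]; exact h2 i h
  · intro h
    constructor
    · intro i hi
      have := h i (Finset.mem_union_left _ hi)
      simpa [hi] using this
    · intro i hi
      have := h i (Finset.mem_union_right _ hi)
      by_cases hs : i ∈ s
      · simp only [hs, if_pos] at this
        rw [this]; exact (hfg i hs hi).symm ▸ (hfg i hs hi)
      · simpa [hs] using this

variable {μ : Measure (ℕ → Bool)}

lemma prob (hμ : IsCantorMeasure μ) : μ Set.univ = 1 := by
  have := hμ ∅ (fun _ => false)
  simpa using this

/-- xor-translation. -/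
def tr (d : ℕ → Bool) (y : ℕ → Bool) : ℕ → Bool := fun n => xor (y n) (d n)

lemma tr_meas (d : ℕ → Bool) : Measurable (tr d) :=
  measurable_pi_lambda _ (fun n =>
    Measurable.comp (f := fun y : ℕ → Bool => y n) (g := fun b => xor b (d n))
      measurable_from_top (measurable_pi_apply n))

lemma tr_tr (d : ℕ → Bool) (y : ℕ → Bool) : tr d (tr d y) = y := by
  funext n
  simp [tr]

lemma tr_preimage_cyl (d : ℕ → Bool) (s : Finset ℕ) (f : ℕ → Bool) :
    (tr d) ⁻¹' (Cyl s f) = Cyl s (fun n => xor (f n) (d n)) := by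
  ext x
  simp only [Cyl, mem_preimage, mem_setOf_eq, tr]
  constructor
  · intro h i hi
    have := h i hi
    cases hx : x i <;> cases hd : d i <;> cases hf : f i <;>
      simp_all
  · intro h i hi
    have := h i hi
    cases hx : x i <;> cases hd : d i <;> cases hf : f i <;>
      simp_all

lemma map_tr (hμ : IsCantorMeasure μ) (d : ℕ → Bool) : μ.map (tr d) = μ := by
  haveI : IsProbabilityMeasure μ := ⟨prob hμ⟩
  refine (ext_of_generate_finite CylSys gen_eq piSys ?_ ?_).symm
  · rintro C ⟨s, f, rfl⟩
    rw [Measure.map_apply (tr_meas d) (measurableSet_cyl s f), tr_preimage_cyl]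
    exact (hμ s f).trans ((hμ s (fun n => xor (f n) (d n))).symm)
  · rw [Measure.map_apply (tr_meas d) MeasurableSet.univ]
    simp

lemma tr_null (hμ : IsCantorMeasure μ) (d : ℕ → Bool) {E : Set (ℕ → Bool)} (hE : μ E = 0) :
    μ ((tr d) ⁻¹' E) = 0 := by
  have h1 : (tr d) ⁻¹' E ⊆ (tr d) ⁻¹' (toMeasurable μ E) :=
    preimage_mono (subset_toMeasurable μ E)
  refine measure_mono_null h1 ?_
  rw [← Measure.map_apply (tr_meas d) (measurableSet_toMeasurable μ E), map_tr hμ d,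
    measure_toMeasurable, hE]

lemma tr_measure_preimage (hμ : IsCantorMeasure μ) (d : ℕ → Bool) {E : Set (ℕ → Bool)}
    (hE : MeasurableSet E) : μ ((tr d) ⁻¹' E) = μ E := by
  rw [← Measure.map_apply (tr_meas d) hE, map_tr hμ d]

lemma singleton_null (hμ : IsCantorMeasure μ) (y : ℕ → Bool) : μ {y} = 0 := by
  have hb : ∀ n : ℕ, μ {y} ≤ (1/2 : ENNReal) ^ n := by
    intro n
    have hsub : {y} ⊆ Cyl (Finset.range n) y := by
      rintro z rfl
      intro i _; rfl
    calc μ {y} ≤ μ (Cyl (Finset.range n) y) := measure_mono hsub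
    _ = (1/2 : ENNReal) ^ (Finset.range n).card := hμ _ _
    _ = (1/2 : ENNReal) ^ n := by rw [Finset.card_range]
  have hlt : (1/2 : ENNReal) < 1 := by norm_num
  have htend := ENNReal.tendsto_pow_atTop_nhds_zero_of_lt_one hlt
  have : μ {y} ≤ 0 := ge_of_tendsto' htend hb
  exact le_antisymm this zero_le

lemma countable_null (hμ : IsCantorMeasure μ) {E : Set (ℕ → Bool)} (hE : E.Countable) :
    μ E = 0 := by
  haveI : NullSingletonClass μ := ⟨fun y => singleton_null hμ y⟩
  exact hE.measure_zero μ

end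
end MFP

namespace MFP
open Set Filter MeasureTheory
noncomputable section

variable {μ : Measure (ℕ → Bool)}

/-- Pattern cylinder over `s` given by `σ : ↥s → Bool`. -/
def Pat (s : Finset ℕ) (σ : {i // i ∈ s} → Bool) : Set (ℕ → Bool) :=
  {x | ∀ i : {i // i ∈ s}, x i = σ i}

lemma pat_eq_cyl (s : Finset ℕ) (σ : {i // i ∈ s} → Bool) :
    Pat s σ = Cyl s (fun n => if h : n ∈ s then σ ⟨n, h⟩ else false) := by
  ext x
  constructor
  · intro h i hi
    simp only [hi, dif_pos]
    exact h ⟨i, hi⟩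
  · intro h i
    have := h i.1 i.2
    simpa [i.2] using this

lemma measurableSet_pat (s : Finset ℕ) (σ : {i // i ∈ s} → Bool) :
    MeasurableSet (Pat s σ) := by
  rw [pat_eq_cyl]; exact measurableSet_cyl _ _

lemma measure_pat (hμ : IsCantorMeasure μ) (s : Finset ℕ) (σ : {i // i ∈ s} → Bool) :
    μ (Pat s σ) = (1/2 : ENNReal) ^ s.card := by
  rw [pat_eq_cyl]; exact hμ s _

lemma pat_disjoint (s : Finset ℕ) : ∀ σ σ' : {i // i ∈ s} → Bool, σ ≠ σ' →
    Disjoint (Pat s σ) (Pat s σ') := by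
  intro σ σ' hne
  rw [Set.disjoint_left]
  intro x hx hx'
  apply hne
  funext i
  rw [← hx i, hx' i]

lemma pat_cover (s : Finset ℕ) (x : ℕ → Bool) : x ∈ Pat s (fun i => x i.1) := fun _ => rfl

/-- The key independence step. -/
lemma indep_cyl (hμ : IsCantorMeasure μ) {Y : Set (ℕ → Bool)}
    (hNM : NullMeasurableSet Y μ)
    (hinv : ∀ d : ℕ → Bool, {n | d n = true}.Finite → (tr d) ⁻¹' Y = Y)
    (s : Finset ℕ) (f : ℕ → Bool) :
    μ (toMeasurable μ Y ∩ Cyl s f) = μ (toMeasurable μ Y) * (1/2 : ENNReal) ^ s.card := by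
  classical
  haveI : IsProbabilityMeasure μ := ⟨prob hμ⟩
  set B := toMeasurable μ Y with hBdef
  have hBmeas : MeasurableSet B := measurableSet_toMeasurable μ Y
  have hae : B =ᵐ[μ] Y := hNM.toMeasurable_ae_eq
  have hBY : μ (B \ Y) = 0 ∧ μ (Y \ B) = 0 := ae_eq_set.mp hae
  -- all pattern pieces have the same measure
  have hpiece : ∀ σ σ' : {i // i ∈ s} → Bool, μ (B ∩ Pat s σ) = μ (B ∩ Pat s σ') := by
    intro σ σ'
    set d : ℕ → Bool := fun n => if h : n ∈ s then xor (σ ⟨n, h⟩) (σ' ⟨n, h⟩) else false with hd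
    have hdfin : {n | d n = true}.Finite := by
      apply Set.Finite.subset s.finite_toSet
      intro n hn
      by_contra hns
      have hns' : ¬ n ∈ s := fun h => hns (Finset.mem_coe.mpr h)
      simp [hd, hns'] at hn
    have hYinv : (tr d) ⁻¹' Y = Y := hinv d hdfin
    have hpre : (tr d) ⁻¹' (Pat s σ) = Pat s σ' := by
      ext x
      simp only [mem_preimage, Pat, mem_setOf_eq, tr]
      constructor
      · intro h i
        have := h i
        simp only [hd, i.2, dif_pos] at this
        cases hx : x i.1 <;> cases hσ : σ i <;> cases hσ' : σ' i <;> simp_all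
      · intro h i
        have := h i
        simp only [hd, i.2, dif_pos]
        cases hx : x i.1 <;> cases hσ : σ i <;> cases hσ' : σ' i <;> simp_all
    -- symm-diff of B and tr d ⁻¹' B is null
    have hBnull : μ ((tr d) ⁻¹' B \ B) = 0 ∧ μ (B \ (tr d) ⁻¹' B) = 0 := by
      constructor
      · have : (tr d) ⁻¹' B \ B ⊆ (tr d) ⁻¹' (B \ Y) ∪ (Y \ B) := by
          intro x ⟨hx1, hx2⟩
          by_cases hxy : tr d x ∈ Y
          · right
            have hx' : x ∈ (tr d) ⁻¹' Y := hxy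
            rw [hYinv] at hx'
            exact ⟨hx', hx2⟩
          · left; exact ⟨hx1, hxy⟩
        refine measure_mono_null this (le_antisymm ?_ zero_le)
        calc μ ((tr d) ⁻¹' (B \ Y) ∪ (Y \ B))
            ≤ μ ((tr d) ⁻¹' (B \ Y)) + μ (Y \ B) := measure_union_le _ _
          _ = 0 := by rw [tr_null hμ d hBY.1, hBY.2, add_zero]
      · have : B \ (tr d) ⁻¹' B ⊆ (B \ Y) ∪ (tr d) ⁻¹' (Y \ B) := by
          intro x ⟨hx1, hx2⟩
          by_cases hxy : x ∈ Y
          · right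
            rw [← hYinv] at hxy
            exact ⟨hxy, hx2⟩
          · left; exact ⟨hx1, hxy⟩
        refine measure_mono_null this (le_antisymm ?_ zero_le)
        calc μ ((B \ Y) ∪ (tr d) ⁻¹' (Y \ B))
            ≤ μ (B \ Y) + μ ((tr d) ⁻¹' (Y \ B)) := measure_union_le _ _
          _ = 0 := by rw [tr_null hμ d hBY.2, hBY.1, zero_add]
    -- now compute
    have h1 : μ (B ∩ Pat s σ') = μ ((tr d) ⁻¹' B ∩ Pat s σ') := by
      apply le_antisymm
      · calc μ (B ∩ Pat s σ') ≤ μ (((tr d) ⁻¹' B ∩ Pat s σ') ∪ (B \ (tr d) ⁻¹' B)) := by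
              apply measure_mono
              intro x ⟨hx1, hx2⟩
              by_cases h : x ∈ (tr d) ⁻¹' B
              · exact Or.inl ⟨h, hx2⟩
              · exact Or.inr ⟨hx1, h⟩
          _ ≤ μ ((tr d) ⁻¹' B ∩ Pat s σ') + μ (B \ (tr d) ⁻¹' B) := measure_union_le _ _
          _ = μ ((tr d) ⁻¹' B ∩ Pat s σ') := by rw [hBnull.2, add_zero]
      · calc μ ((tr d) ⁻¹' B ∩ Pat s σ') ≤ μ ((B ∩ Pat s σ') ∪ ((tr d) ⁻¹' B \ B)) := by
              apply measure_mono
              intro x ⟨hx1, hx2⟩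
              by_cases h : x ∈ B
              · exact Or.inl ⟨h, hx2⟩
              · exact Or.inr ⟨hx1, h⟩
          _ ≤ μ (B ∩ Pat s σ') + μ ((tr d) ⁻¹' B \ B) := measure_union_le _ _
          _ = μ (B ∩ Pat s σ') := by rw [hBnull.1, add_zero]
    have h2 : (tr d) ⁻¹' B ∩ Pat s σ' = (tr d) ⁻¹' (B ∩ Pat s σ) := by
      rw [Set.preimage_inter, hpre]
    rw [h1, h2, tr_measure_preimage hμ d (hBmeas.inter (measurableSet_pat s σ))]
  -- partition
  have hpart : μ B = ∑ σ : {i // i ∈ s} → Bool, μ (B ∩ Pat s σ) := by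
    have hBeq : B = ⋃ σ ∈ (Finset.univ : Finset ({i // i ∈ s} → Bool)), B ∩ Pat s σ := by
      ext x
      simp only [mem_iUnion]
      constructor
      · intro hx
        exact ⟨fun i => x i.1, Finset.mem_univ _, hx, pat_cover s x⟩
      · rintro ⟨σ, _, hx, -⟩
        exact hx
    have hdisj : ((Finset.univ : Finset ({i // i ∈ s} → Bool)) :
        Set ({i // i ∈ s} → Bool)).PairwiseDisjoint (fun σ => B ∩ Pat s σ) := by
      intro σ _ σ' _ hne
      exact (pat_disjoint s σ σ' hne).mono inter_subset_right inter_subset_right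
    have hmeas2 : ∀ σ ∈ (Finset.univ : Finset ({i // i ∈ s} → Bool)),
        MeasurableSet (B ∩ Pat s σ) := fun σ _ => hBmeas.inter (measurableSet_pat s σ)
    have hsum0 := measure_biUnion_finset (μ := μ) hdisj hmeas2
    rw [← hBeq] at hsum0
    exact hsum0
  -- constant value
  set σf : {i // i ∈ s} → Bool := fun i => f i.1 with hσf
  have hconst : ∀ σ : {i // i ∈ s} → Bool, μ (B ∩ Pat s σ) = μ (B ∩ Pat s σf) :=
    fun σ => hpiece σ σf
  have hsum : μ B = (Fintype.card ({i // i ∈ s} → Bool)) * μ (B ∩ Pat s σf) := by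
    rw [hpart, Finset.sum_congr rfl (fun σ _ => hconst σ), Finset.sum_const,
      Finset.card_univ, nsmul_eq_mul]
  have hcard : (Fintype.card ({i // i ∈ s} → Bool) : ENNReal) = 2 ^ s.card := by
    rw [Fintype.card_fun, Fintype.card_bool, Fintype.card_coe]
    push_cast
    ring
  have hcylpat : Cyl s f = Pat s σf := by
    ext x
    constructor
    · intro h i
      exact h i.1 i.2
    · intro h i hi
      exact h ⟨i, hi⟩
  rw [hcylpat]
  -- solve: μ B = 2^card * v  ⇒  v = μ B * (1/2)^card
  have h2pow_ne_zero : (2 : ENNReal) ^ s.card ≠ 0 := by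
    apply pow_ne_zero
    norm_num
  have h2pow_ne_top : (2 : ENNReal) ^ s.card ≠ ⊤ := by
    apply ENNReal.pow_ne_top
    norm_num
  have hhalf : (1/2 : ENNReal) ^ s.card * (2 : ENNReal) ^ s.card = 1 := by
    rw [← mul_pow]
    have : (1/2 : ENNReal) * 2 = 1 := by
      rw [one_div]
      exact ENNReal.inv_mul_cancel (by norm_num) (by norm_num)
    rw [this, one_pow]
  calc μ (B ∩ Pat s σf)
      = 1 * μ (B ∩ Pat s σf) := (one_mul _).symm
    _ = ((1/2 : ENNReal) ^ s.card * 2 ^ s.card) * μ (B ∩ Pat s σf) := by rw [hhalf]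
    _ = (1/2 : ENNReal) ^ s.card * (2 ^ s.card * μ (B ∩ Pat s σf)) := by ring
    _ = (1/2 : ENNReal) ^ s.card * μ B := by rw [hcard] at hsum; rw [← hsum]
    _ = μ B * (1/2 : ENNReal) ^ s.card := by ring

lemma zero_or_one (hμ : IsCantorMeasure μ) {Y : Set (ℕ → Bool)}
    (hNM : NullMeasurableSet Y μ)
    (hinv : ∀ d : ℕ → Bool, {n | d n = true}.Finite → (tr d) ⁻¹' Y = Y) :
    μ Y = 0 ∨ μ Y = 1 := by
  haveI : IsProbabilityMeasure μ := ⟨prob hμ⟩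
  set B := toMeasurable μ Y with hBdef
  have hBmeas : MeasurableSet B := measurableSet_toMeasurable μ Y
  have hμYB : μ Y = μ B := (measure_toMeasurable Y).symm
  have hres : μ.restrict B = (μ B) • μ := by
    refine ext_of_generate_finite CylSys gen_eq piSys ?_ ?_
    · rintro C ⟨s, f, rfl⟩
      rw [Measure.restrict_apply (measurableSet_cyl s f), Set.inter_comm,
        indep_cyl hμ hNM hinv s f, Measure.smul_apply, smul_eq_mul, ← hBdef,
        show μ (Cyl s f) = (1/2 : ENNReal) ^ s.card from hμ s f]
    · rw [Measure.restrict_apply MeasurableSet.univ, Set.univ_inter, Measure.smul_apply,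
        smul_eq_mul, measure_univ, mul_one]
  have hBB : μ B = μ B * μ B := by
    have := congrArg (fun ν => ν B) hres
    simpa [Measure.restrict_apply hBmeas, Measure.smul_apply, smul_eq_mul] using this
  rcases eq_or_ne (μ B) 0 with h0 | h0
  · left; rw [hμYB, h0]
  · right
    rw [hμYB]
    have hne_top : μ B ≠ ⊤ := (measure_lt_top μ B).ne
    have h1 : μ B * 1 = μ B * μ B := by rw [mul_one]; exact hBB
    exact ((ENNReal.mul_left_strictMono h0 hne_top).injective (by rw [one_mul]; exact hBB)).symm

end
end MFP

namespace MFP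
open Set Filter MeasureTheory
noncomputable section

/-- The canonical meager sets: points hitting `true` in every block `[c i, c (i+1))`
from the `m`-th on. -/
def Emg (c : ℕ → ℕ) (m : ℕ) : Set (ℕ → Bool) :=
  {y | ∀ i, m ≤ i → ∃ n, c i ≤ n ∧ n < c (i + 1) ∧ y n = true}

lemma isClosed_Emg (c : ℕ → ℕ) (m : ℕ) : IsClosed (Emg c m) := by
  have : Emg c m = ⋂ i, ⋂ (_ : m ≤ i), ⋃ n ∈ Set.Ico (c i) (c (i + 1)),
      {y : ℕ → Bool | y n = true} := by
    ext y
    constructor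
    · intro hy
      simp only [Set.mem_iInter, Set.mem_iUnion, Set.mem_Ico, Set.mem_setOf_eq]
      intro i hi
      obtain ⟨n, h1, h2, h3⟩ := hy i hi
      exact ⟨n, ⟨h1, h2⟩, h3⟩
    · intro hy i hi
      simp only [Set.mem_iInter, Set.mem_iUnion, Set.mem_Ico, Set.mem_setOf_eq] at hy
      obtain ⟨n, ⟨h1, h2⟩, h3⟩ := hy i hi
      exact ⟨n, h1, h2, h3⟩
  rw [this]
  refine isClosed_iInter fun i => isClosed_iInter fun _ => ?_
  refine Set.Finite.isClosed_biUnion (Set.finite_Ico _ _) fun n _ => ?_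
  have : {y : ℕ → Bool | y n = true} = (fun y : ℕ → Bool => y n) ⁻¹' {true} := rfl
  rw [this]
  exact (isClosed_discrete _).preimage (continuous_apply n)

lemma interior_Emg (c : ℕ → ℕ) (hc : StrictMono c) (m : ℕ) :
    interior (Emg c m) = ∅ := by
  by_contra h
  obtain ⟨y, hy⟩ := Set.nonempty_iff_ne_empty.mpr h
  obtain ⟨I, u, hIu, hsub⟩ := isOpen_pi_iff.mp isOpen_interior y hy
  set i := max m (I.sup id + 1) with hi
  have him : m ≤ i := le_max_left _ _
  have hIlt : ∀ a ∈ I, a < c i := by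
    intro a ha
    have h1 : a ≤ I.sup id := Finset.le_sup (f := id) ha
    have h2 : I.sup id + 1 ≤ i := le_max_right _ _
    have h3 : i ≤ c i := hc.le_apply
    omega
  set z : ℕ → Bool := fun n => if c i ≤ n then false else y n with hz
  have hzmem : z ∈ (I : Set ℕ).pi u := by
    intro a ha
    have : z a = y a := by
      have := hIlt a ha
      simp only [hz]
      rw [if_neg (by omega)]
    rw [this]
    exact (hIu a ha).2
  have hzE : z ∈ Emg c m := interior_subset (hsub hzmem)
  obtain ⟨n, hn1, hn2, hn3⟩ := hzE i him
  simp only [hz] at hn3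
  rw [if_pos hn1] at hn3
  exact Bool.false_ne_true hn3

lemma isMeagre_Emg (c : ℕ → ℕ) (hc : StrictMono c) (m : ℕ) : IsMeagre (Emg c m) := by
  rw [IsMeagre]
  refine residual_of_dense_open (isClosed_Emg c m).isOpen_compl ?_
  exact interior_eq_empty_iff_dense_compl.mp (interior_Emg c hc m)

lemma isMeagre_union_Emg (c : ℕ → ℕ) (hc : StrictMono c) :
    IsMeagre (⋃ m, Emg c m) :=
  isMeagre_iUnion (fun m => isMeagre_Emg c hc m)

end
end MFP

open Set Filter MeasureTheory

/-- If there is a non-`μ`-measurable set `X ⊆ 2^ω` such that every family of functions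
`ℕ → ℕ` of cardinality `≤ |X|` is bounded under eventual domination (i.e. `unif < 𝔟`),
then there is a free filter on `ℕ` which is meager but not `μ`-measurable. -/
theorem unif_lt_bounding_gives_meager_nonmeasurable_filter
    (μ : Measure (ℕ → Bool)) (hμ : IsCantorMeasure μ)
    (X : Set (ℕ → Bool)) (hX : ¬ NullMeasurableSet X μ)
    (hbound : ∀ G : Set (ℕ → ℕ), Cardinal.mk G ≤ Cardinal.mk X →
      ∃ g : ℕ → ℕ, ∀ f ∈ G, ∀ᶠ n in Filter.atTop, f n ≤ g n) :
    ∃ F : Set (Set ℕ), IsFreeFilter F ∧ IsMeagre (chi '' F) ∧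
      ¬ NullMeasurableSet (chi '' F) μ := by
  classical
  haveI : IsProbabilityMeasure μ := ⟨MFP.prob hμ⟩
  -- X is infinite
  have hXuncount : ¬ X.Countable := by
    intro h
    have hnull : μ X = 0 := MFP.countable_null hμ h
    exact hX (MeasurableSet.empty.nullMeasurableSet.congr ((ae_eq_empty.mpr hnull).symm))
  have hXinf : X.Infinite := by
    by_contra h
    rw [Set.not_infinite] at h
    exact hXuncount h.countable
  haveI : Infinite ↥X := hXinf.to_subtype
  -- ultrafilter extending the cofinite filter
  let U : Ultrafilter ℕ := Filter.hyperfilter ℕ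
  have hUinf : ∀ A : Set ℕ, A ∈ U → A.Infinite := by
    intro A hA
    by_contra hfin
    rw [Set.not_infinite] at hfin
    have hAc : Aᶜ ∈ Filter.cofinite := by
      rw [Filter.mem_cofinite, compl_compl]; exact hfin
    have h1 : Aᶜ ∈ U := Filter.le_def.mp (Filter.hyperfilter_le_cofinite) _ hAc
    have h2 : A ∩ Aᶜ ∈ U := Filter.inter_mem hA h1
    rw [Set.inter_compl_self] at h2
    exact Filter.empty_notMem (U : Filter ℕ) h2
  -- the flip map
  let tr1 : (ℕ → Bool) → (ℕ → Bool) := MFP.tr (fun _ => true)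
  -- correcting map: keep x if its support is in U, otherwise flip it
  let phi : (ℕ → Bool) → (ℕ → Bool) := fun x => if {n | x n = true} ∈ U then x else tr1 x
  have htr1S : ∀ y : ℕ → Bool, {n | tr1 y n = true} = {n | y n = true}ᶜ := by
    intro y
    ext n
    simp only [MFP.tr, tr1, mem_setOf_eq, mem_compl_iff, Bool.xor_true]
    cases h : y n <;> simp
  have hphiU : ∀ x, {n | phi x n = true} ∈ U := by
    intro x
    by_cases h : {n | x n = true} ∈ U
    · simp only [phi, if_pos h]; exact h
    · simp only [phi, if_neg h]
      rw [htr1S x]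
      exact Ultrafilter.compl_mem_iff_notMem.mpr h
  set W : Set (ℕ → Bool) := phi '' X with hW
  -- basic sets of the filter
  let bst : Finset (ℕ → Bool) → Set ℕ := fun T => ⋂ w ∈ T, {n | w n = true}
  have hbst_mem : ∀ (T : Finset (ℕ → Bool)) (n : ℕ), n ∈ bst T ↔ ∀ w ∈ T, w n = true := by
    intro T n
    simp [bst]
  have hbstU : ∀ T : Finset (ℕ → Bool), ↑T ⊆ W → bst T ∈ U := by
    intro T hT
    have : ∀ w ∈ T, {n | w n = true} ∈ (U : Filter ℕ) := by
      intro w hw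
      obtain ⟨x, hx, rfl⟩ := hT hw
      exact hphiU x
    exact (Filter.biInter_finset_mem T).mpr this
  have hbstInf : ∀ T : Finset (ℕ → Bool), ↑T ⊆ W → (bst T).Infinite :=
    fun T hT => hUinf _ (hbstU T hT)
  -- the filter
  set F : Set (Set ℕ) := {A | ∃ T : Finset (ℕ → Bool), ↑T ⊆ W ∧ (bst T \ A).Finite} with hF
  have hFuniv : Set.univ ∈ F := ⟨∅, by simp, by simp⟩
  have hFinter : ∀ A ∈ F, ∀ B ∈ F, A ∩ B ∈ F := by
    rintro A ⟨T1, hT1, hf1⟩ B ⟨T2, hT2, hf2⟩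
    refine ⟨T1 ∪ T2, by rw [Finset.coe_union]; exact Set.union_subset hT1 hT2, ?_⟩
    refine (hf1.union hf2).subset ?_
    rintro n ⟨hn1, hn2⟩
    have h1 : ∀ w ∈ T1 ∪ T2, w n = true := (hbst_mem _ n).mp hn1
    by_cases hA : n ∈ A
    · right
      refine ⟨(hbst_mem _ n).mpr (fun w hw => h1 w (Finset.mem_union_right _ hw)), ?_⟩
      intro hB
      exact hn2 ⟨hA, hB⟩
    · left
      exact ⟨(hbst_mem _ n).mpr (fun w hw => h1 w (Finset.mem_union_left _ hw)), hA⟩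
  have hFsup : ∀ A ∈ F, ∀ B : Set ℕ, A ⊆ B → B ∈ F := by
    rintro A ⟨T, hT, hf⟩ B hAB
    exact ⟨T, hT, hf.subset (fun n hn => ⟨hn.1, fun h => hn.2 (hAB h)⟩)⟩
  have hFne : (∅ : Set ℕ) ∉ F := by
    rintro ⟨T, hT, hf⟩
    rw [Set.diff_empty] at hf
    exact hbstInf T hT hf
  have hFcof : ∀ A : Set ℕ, Aᶜ.Finite → A ∈ F := by
    intro A hA
    refine ⟨∅, by simp, ?_⟩
    have h2 : bst (∅ : Finset (ℕ → Bool)) \ A = Aᶜ := by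
      ext n
      simp [bst]
    rw [h2]
    exact hA
  -- mod finite closure
  have hFmod : ∀ A ∈ F, ∀ A' : Set ℕ, ((A \ A') ∪ (A' \ A)).Finite → A' ∈ F := by
    rintro A ⟨T, hT, hf⟩ A' hfin
    refine ⟨T, hT, (hf.union hfin).subset ?_⟩
    rintro n ⟨hn1, hn2⟩
    by_cases hA : n ∈ A
    · right; left; exact ⟨hA, hn2⟩
    · left; exact ⟨hn1, hA⟩
  -- chi image characterization
  have hchiS : ∀ A : Set ℕ, {n | chi A n = true} = A := by
    intro A
    ext n
    simp only [chi, mem_setOf_eq]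
    by_cases h : n ∈ A <;> simp [h]
  have hSchi : ∀ y : ℕ → Bool, chi {n | y n = true} = y := by
    intro y
    funext n
    simp only [chi]
    by_cases h : n ∈ {k | y k = true}
    · rw [if_pos h]
      have h' : y n = true := h
      exact h'.symm
    · rw [if_neg h]
      have hf : y n = false := by
        cases hy : y n
        · rfl
        · exact absurd hy h
      rw [hf]
  have hYdef : chi '' F = {y : ℕ → Bool | {n | y n = true} ∈ F} := by
    ext y
    constructor
    · rintro ⟨A, hA, rfl⟩
      show {n | chi A n = true} ∈ F
      rw [hchiS A]
      exact hA
    · intro hy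
      exact ⟨{n | y n = true}, hy, hSchi y⟩
  -- ### meagerness ###
  let TW : Finset ↥X → Finset (ℕ → Bool) := fun T => Finset.image (fun x : ↥X => phi x.1) T
  let nxt : Finset ↥X → ℕ → ℕ := fun T n => sInf {m | m ∈ bst (TW T) ∧ n < m}
  let G : Set (ℕ → ℕ) := Set.range nxt
  have hGcard : Cardinal.mk G ≤ Cardinal.mk X := by
    calc Cardinal.mk ↥G ≤ Cardinal.mk (Finset ↥X) := Cardinal.mk_range_le
      _ ≤ Cardinal.mk (List ↥X) := Cardinal.mk_le_of_injective
          (f := fun T : Finset ↥X => T.toList) (fun a b h => by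
            have := congrArg List.toFinset h
            rwa [Finset.toList_toFinset, Finset.toList_toFinset] at this)
      _ = Cardinal.mk ↥X := Cardinal.mk_list_eq_mk ↥X
  obtain ⟨g, hg⟩ := hbound G hGcard
  -- blocks
  let c : ℕ → ℕ := fun i => Nat.rec 0 (fun _ ci => max ci (g ci) + 1) i
  have hcs : ∀ i, c (i + 1) = max (c i) (g (c i)) + 1 := fun i => rfl
  have hcmono : StrictMono c := strictMono_nat_of_lt_succ (fun i => by
    rw [hcs]
    exact Nat.lt_succ_of_le (le_max_left _ _))
  have hgc : ∀ i, g (c i) < c (i + 1) := fun i => by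
    rw [hcs]
    exact Nat.lt_succ_of_le (le_max_right _ _)
  -- every member of F hits almost every block
  have hhit : ∀ T : Finset (ℕ → Bool), ↑T ⊆ W → ∀ A : Set ℕ, (bst T \ A).Finite →
      ∃ m, ∀ i, m ≤ i → ∃ n, c i ≤ n ∧ n < c (i + 1) ∧ n ∈ A := by
    intro T hT A hfin
    have hlift : ∀ w : {w // w ∈ T}, ∃ x : ↥X, phi ↑x = ↑w := by
      intro w
      obtain ⟨x, hx, hxe⟩ := hT w.2
      exact ⟨⟨x, hx⟩, hxe⟩
    choose lf hlf using hlift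
    let T' : Finset ↥X := T.attach.image lf
    have hTT' : TW T' = T := by
      ext w
      constructor
      · intro hw
        obtain ⟨x, hx, rfl⟩ := Finset.mem_image.mp hw
        obtain ⟨v, -, rfl⟩ := Finset.mem_image.mp hx
        rw [hlf v]
        exact v.2
      · intro hw
        exact Finset.mem_image.mpr ⟨lf ⟨w, hw⟩,
          Finset.mem_image.mpr ⟨⟨w, hw⟩, Finset.mem_attach _ _, rfl⟩, hlf _⟩
    have hfG : nxt T' ∈ G := ⟨T', rfl⟩
    obtain ⟨N, hN⟩ := Filter.eventually_atTop.mp (hg _ hfG)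
    have hbinf : (bst T).Infinite := hbstInf T hT
    obtain ⟨M, hM⟩ : ∃ M, ∀ k ∈ bst T \ A, k < M := by
      rcases Set.Finite.bddAbove hfin with ⟨M0, hM0⟩
      exact ⟨M0 + 1, fun k hk => Nat.lt_succ_of_le (hM0 hk)⟩
    refine ⟨max N M, fun i hi => ?_⟩
    have hiN : N ≤ i := le_trans (le_max_left _ _) hi
    have hiM : M ≤ i := le_trans (le_max_right _ _) hi
    have hciN : N ≤ c i := le_trans hiN hcmono.le_apply
    have hciM : M ≤ c i := le_trans hiM hcmono.le_apply
    have hne : {m | m ∈ bst (TW T') ∧ c i < m}.Nonempty := by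
      rw [hTT']
      obtain ⟨b, hb, hbgt⟩ := hbinf.exists_gt (c i)
      exact ⟨b, hb, hbgt⟩
    have hq := Nat.sInf_mem hne
    have hqdef : nxt T' (c i) = sInf {m | m ∈ bst (TW T') ∧ c i < m} := rfl
    rw [← hqdef] at hq
    have hq3 : nxt T' (c i) ≤ g (c i) := hN (c i) hciN
    have hq1 : nxt T' (c i) ∈ bst T := by
      have h' := hq.1
      rwa [hTT'] at h'
    have hq2 : c i < nxt T' (c i) := hq.2
    have hq4 : nxt T' (c i) < c (i + 1) := lt_of_le_of_lt hq3 (hgc i)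
    have hqA : nxt T' (c i) ∈ A := by
      by_contra hqa
      have := hM _ ⟨hq1, hqa⟩
      omega
    exact ⟨nxt T' (c i), le_of_lt hq2, hq4, hqA⟩
  have hmeag : IsMeagre (chi '' F) := by
    refine (MFP.isMeagre_union_Emg c hcmono).mono ?_
    rw [hYdef]
    intro y hy
    obtain ⟨T, hT, hfin⟩ := hy
    obtain ⟨m, hm⟩ := hhit T hT _ hfin
    refine Set.mem_iUnion.mpr ⟨m, ?_⟩
    intro i hi
    obtain ⟨n, h1, h2, h3⟩ := hm i hi
    exact ⟨n, h1, h2, h3⟩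
  -- ### nonmeasurability ###
  have hnm : ¬ NullMeasurableSet (chi '' F) μ := by
    intro hNM
    -- invariance under finite modifications
    have hclosed : ∀ d : ℕ → Bool, {n | d n = true}.Finite →
        ∀ y, y ∈ chi '' F → MFP.tr d y ∈ chi '' F := by
      intro d hd y hy
      rw [hYdef] at hy ⊢
      refine hFmod _ hy _ ?_
      refine hd.subset ?_
      rintro n (⟨hn1, hn2⟩ | ⟨hn1, hn2⟩) <;>
      · simp only [mem_setOf_eq, MFP.tr] at hn1 hn2 ⊢
        cases hdn : d n
        · exfalso
          cases hyn : y n <;> simp [hyn, hdn] at hn1 hn2 <;> simp_all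
        · rfl
    have hinv : ∀ d : ℕ → Bool, {n | d n = true}.Finite →
        (MFP.tr d) ⁻¹' (chi '' F) = chi '' F := by
      intro d hd
      ext y
      constructor
      · intro hy
        have := hclosed d hd _ hy
        rwa [MFP.tr_tr] at this
      · intro hy
        exact hclosed d hd y hy
    -- Y and its flip are disjoint
    have hdisj : ∀ y, y ∈ chi '' F → tr1 y ∈ chi '' F → False := by
      intro y hy hfy
      rw [hYdef] at hy hfy
      simp only [Set.mem_setOf_eq] at hy hfy
      have hflip : {n | tr1 y n = true} = {n | y n = true}ᶜ := htr1S y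
      rw [hflip] at hfy
      obtain ⟨T1, hT1, hf1⟩ := hy
      obtain ⟨T2, hT2, hf2⟩ := hfy
      have hsub : bst (T1 ∪ T2) ⊆ (bst T1 \ {n | y n = true}) ∪
          (bst T2 \ {n | y n = true}ᶜ) := by
        intro n hn
        have h1 : ∀ w ∈ T1 ∪ T2, w n = true := (hbst_mem _ n).mp hn
        by_cases hA : n ∈ {n | y n = true}
        · right
          exact ⟨(hbst_mem _ n).mpr (fun w hw => h1 w (Finset.mem_union_right _ hw)),
            fun h => h hA⟩
        · left
          exact ⟨(hbst_mem _ n).mpr (fun w hw => h1 w (Finset.mem_union_left _ hw)), hA⟩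
      have hfin : (bst (T1 ∪ T2)).Finite := ((hf1.union hf2).subset hsub)
      exact hbstInf (T1 ∪ T2)
        (by rw [Finset.coe_union]; exact Set.union_subset hT1 hT2) hfin
    -- zero-one law
    rcases MFP.zero_or_one hμ hNM hinv with h0 | h1
    · -- Y is null: X is covered by two null sets, contradiction
      set N := toMeasurable μ (chi '' F) with hN
      have hNnull : μ N = 0 := by rw [hN, measure_toMeasurable]; exact h0
      have hXsub : X ⊆ N ∪ tr1 ⁻¹' N := by
        intro x hx
        have hxW : phi x ∈ W := ⟨x, hx, rfl⟩
        have hphiF : {n | phi x n = true} ∈ F := by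
          refine ⟨{phi x}, ?_, ?_⟩
          · intro w hw
            rw [Finset.mem_coe, Finset.mem_singleton] at hw
            rw [hw]
            exact hxW
          · have : bst {phi x} = {n | phi x n = true} := by simp [bst]
            rw [this, Set.diff_self]
            exact Set.finite_empty
        have hphiY : phi x ∈ chi '' F := by
          rw [hYdef]
          exact hphiF
        by_cases h : {n | x n = true} ∈ U
        · left
          have : phi x = x := by simp only [phi, if_pos h]
          rw [this] at hphiY
          exact subset_toMeasurable μ (chi '' F) hphiY
        · right
          have : phi x = tr1 x := by simp only [phi, if_neg h]
          rw [this] at hphiY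
          exact subset_toMeasurable μ (chi '' F) hphiY
      have hXnull : μ X = 0 := by
        refine measure_mono_null hXsub (le_antisymm ?_ zero_le)
        calc μ (N ∪ tr1 ⁻¹' N) ≤ μ N + μ (tr1 ⁻¹' N) := measure_union_le _ _
          _ = 0 := by rw [hNnull, MFP.tr_null hμ _ hNnull, add_zero]
      exact hX (MeasurableSet.empty.nullMeasurableSet.congr ((ae_eq_empty.mpr hXnull).symm))
    · -- Y has measure one: contradicts flip-disjointness
      set B := toMeasurable μ (chi '' F) with hB
      have hae : B =ᵐ[μ] (chi '' F) := hNM.toMeasurable_ae_eq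
      have hBY : μ (B \ (chi '' F)) = 0 := (ae_eq_set.mp hae).1
      have hBmeas : MeasurableSet B := measurableSet_toMeasurable μ (chi '' F)
      have hB1 : μ B = 1 := by rw [hB, measure_toMeasurable]; exact h1
      set B' := tr1 ⁻¹' B with hB'
      have hB'meas : MeasurableSet B' := hBmeas.preimage (MFP.tr_meas _)
      have hB'1 : μ B' = 1 := by rw [hB', MFP.tr_measure_preimage hμ _ hBmeas]; exact hB1
      have hsub : B ∩ B' ⊆ (B \ (chi '' F)) ∪ tr1 ⁻¹' (B \ (chi '' F)) := by
        rintro x ⟨hx1, hx2⟩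
        by_cases hxy : x ∈ chi '' F
        · by_cases hxy' : tr1 x ∈ chi '' F
          · exact absurd hxy' (fun h => hdisj x hxy h)
          · right
            exact ⟨hx2, hxy'⟩
        · left
          exact ⟨hx1, hxy⟩
      have hBB'0 : μ (B ∩ B') = 0 := by
        refine measure_mono_null hsub (le_antisymm ?_ zero_le)
        calc μ ((B \ (chi '' F)) ∪ tr1 ⁻¹' (B \ (chi '' F)))
            ≤ μ (B \ (chi '' F)) + μ (tr1 ⁻¹' (B \ (chi '' F))) :=
            measure_union_le _ _
          _ = 0 := by rw [hBY, MFP.tr_null hμ _ hBY, add_zero]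
      have hsum := measure_union_add_inter (μ := μ) B hB'meas
      rw [hBB'0, add_zero, hB1, hB'1] at hsum
      have hle : μ (B ∪ B') ≤ 1 := prob_le_one
      rw [hsum] at hle
      norm_num at hle
  exact ⟨F, ⟨⟨hFuniv, hFinter, hFsup⟩, hFne, hFcof⟩, hmeag, hnm⟩
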